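/- arXiv:0902.0919 — 5 statements merged into one kernel-verified Lean document; each statement's English description precedes it below -/
import Mathlib

section
/- Let $n, m, p$ be natural numbers, let $E \in \mathbb{C}^{p \times n}$ and $A \in \mathbb{C}^{p \times m}$ be complex matrices, and let $\Theta \in \mathbb{C}^{(n+m) \times (n+m)}$ be a Hermitian matrix. Suppose (i) for every pair $(z, w) \in \mathbb{C}^n \times \mathbb{C}^m$ with $(z,w) \neq 0$ and $E z = A w$, the quadratic form satisfies $\begin{pmatrix} z \\ w \end{pmatrix}^* \Theta \begin{pmatrix} z \\ w \end{pmatrix} > 0$ (i.e. $\Theta$ is positive definite on the kernel of $[E\; -A]$). Then for every matrix $\nabla \in \mathbb{C}^{m \times n}$ satisfying (ii) $\begin{pmatrix} I_n \\ \nabla \end{pmatrix}^* \Theta \begin{pmatrix} I_n \\ \nabla \end{pmatrix} \preceq 0$ (negative semidefinite), the interconnection $E z = A w$, $w = \nabla z$ is well-posed, i.e. the only vector $z \in \mathbb{C}^n$ with $E z = A \nabla z$ is $z = 0$ (equivalently, $E - A\nabla$ has trivial kernel). -/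
theorem quadratic_separation_sufficiency_general (n m p : ℕ)
    (E : Matrix (Fin p) (Fin n) ℂ) (A : Matrix (Fin p) (Fin m) ℂ)
    (Θ : Matrix (Fin n ⊕ Fin m) (Fin n ⊕ Fin m) ℂ)
    (hpos : ∀ (z : Fin n → ℂ) (w : Fin m → ℂ), ¬(z = 0 ∧ w = 0) →
      E.mulVec z = A.mulVec w →
      0 < (star (Sum.elim z w) ⬝ᵥ Θ.mulVec (Sum.elim z w)).re)
    (D : Matrix (Fin m) (Fin n) ℂ)
    (hneg : ∀ x : Fin n → ℂ,
      (star (Sum.elim x (D.mulVec x)) ⬝ᵥ Θ.mulVec (Sum.elim x (D.mulVec x))).re ≤ 0) :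
    ∀ z : Fin n → ℂ, E.mulVec z = A.mulVec (D.mulVec z) → z = 0 := by
  intro z hz
  by_contra hz0
  exact (hneg z).not_gt (hpos z (D.mulVec z) (fun h => hz0 h.1) hz)

/-- Sufficiency direction of the quadratic separation theorem: if the Hermitian
separator `Θ` is positive definite on the kernel of `[E  -A]` and satisfies
`[I  ∇*] Θ [I; ∇] ≼ 0`, then the interconnection `E z = A w`, `w = ∇ z` is
well-posed, i.e. `E - A∇` has trivial kernel. -/
theorem quadratic_separation_sufficiency (n m p : ℕ)
    (E : Matrix (Fin p) (Fin n) ℂ) (A : Matrix (Fin p) (Fin m) ℂ)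
    (Θ : Matrix (Fin n ⊕ Fin m) (Fin n ⊕ Fin m) ℂ)
    (hHerm : Θ.IsHermitian)
    (hpos : ∀ (z : Fin n → ℂ) (w : Fin m → ℂ), ¬(z = 0 ∧ w = 0) →
      E.mulVec z = A.mulVec w →
      0 < (star (Sum.elim z w) ⬝ᵥ Θ.mulVec (Sum.elim z w)).re)
    (D : Matrix (Fin m) (Fin n) ℂ)
    (hneg : ∀ x : Fin n → ℂ,
      (star (Sum.elim x (D.mulVec x)) ⬝ᵥ Θ.mulVec (Sum.elim x (D.mulVec x))).re ≤ 0) :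
    ∀ z : Fin n → ℂ, E.mulVec z = A.mulVec (D.mulVec z) → z = 0 :=
  quadratic_separation_sufficiency_general n m p E A Θ hpos D hneg
end

section
/- Let $\bar{h} \geq 0$ and let $h \in [0, \bar{h}]$ be real. Then for every complex number $s \neq 0$ with $\operatorname{Re}(s) \geq 0$, one has $\left| \dfrac{1 - e^{-h s}}{s} \right| \leq \bar{h}$. -/
open Complex intervalIntegral

lemma one_sub_exp_neg_mul_div_eq_integral {s : ℂ} (hs : s ≠ 0) (h : ℝ) :
    (1 - exp (-(h : ℂ) * s)) / s = ∫ t in (0 : ℝ)..h, exp (-s * t) := by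
  rw [integral_exp_mul_complex (neg_ne_zero.mpr hs), ofReal_zero, mul_zero, exp_zero,
    div_neg, ← neg_div, neg_sub, neg_mul_comm, mul_comm]

lemma norm_exp_neg_mul_le_one {s : ℂ} (hre : 0 ≤ s.re) {t : ℝ} (ht : 0 ≤ t) :
    ‖exp (-s * t)‖ ≤ 1 := by
  rw [norm_exp, Real.exp_le_one_iff, re_mul_ofReal, neg_re]
  exact mul_nonpos_of_nonpos_of_nonneg (neg_nonpos.mpr hre) ht

lemma norm_integral_exp_neg_mul_le {s : ℂ} (hre : 0 ≤ s.re) {h : ℝ} (h0 : 0 ≤ h) :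
    ‖∫ t in (0 : ℝ)..h, exp (-s * t)‖ ≤ h := by
  have hbound : ∀ t ∈ Set.uIoc 0 h, ‖exp (-s * t)‖ ≤ 1 := fun t ht ↦
    norm_exp_neg_mul_le_one hre (Set.uIoc_of_le h0 ▸ ht).1.le
  simpa [abs_of_nonneg h0] using norm_integral_le_of_norm_le_const hbound

theorem abs_one_sub_exp_div_le_general (hbar h : ℝ) (h0 : 0 ≤ h) (hh : h ≤ hbar)
    (s : ℂ) (hs : s ≠ 0) (hre : 0 ≤ s.re) :
    ‖(1 - Complex.exp (-(h : ℂ) * s)) / s‖ ≤ hbar := by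
  rw [one_sub_exp_neg_mul_div_eq_integral hs]
  exact (norm_integral_exp_neg_mul_le hre h0).trans hh

/-- For a delay `h ∈ [0, h̄]` and any nonzero `s` in the closed right half-plane,
`|(1 - e^{-hs})/s| ≤ h̄`. -/
theorem abs_one_sub_exp_div_le (hbar h : ℝ) (hbar0 : 0 ≤ hbar) (h0 : 0 ≤ h) (hh : h ≤ hbar)
    (s : ℂ) (hs : s ≠ 0) (hre : 0 ≤ s.re) :
    ‖(1 - Complex.exp (-(h : ℂ) * s)) / s‖ ≤ hbar :=
  abs_one_sub_exp_div_le_general hbar h h0 hh s hs hre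
end

section
/- Let $N \geq 1$, set $n = N+1$, let $s \neq 0$ be a complex number with $\operatorname{Re}(s) \geq 0$, let $\tau^f_i, \tau^b_i, \tau_i \geq 0$ ($i = 1, \ldots, N$) be real delays, let $P \in \mathbb{C}^{n \times n}$ be Hermitian positive semidefinite, and let $Q^f, Q^b, Q \in \mathbb{C}^{N \times N}$ be diagonal matrices with nonnegative real diagonal entries. Define the block-diagonal uncertainty $\nabla = \mathrm{Diag}\big(s^{-1} I_n,\; \mathcal{D}_{\tau^f},\; \mathcal{D}_{\tau^b},\; \mathcal{D}_{\tau}\big)$ where $\mathcal{D}_\Diamond = \mathrm{diag}(e^{-\Diamond_1 s}, \ldots, e^{-\Diamond_N s})$, and the Hermitian separator $\Theta = \begin{pmatrix} \Theta_{11} & \Theta_{12} \\ \Theta_{12}^* & \Theta_{22} \end{pmatrix}$ with $\Theta_{11} = \mathrm{Diag}(0_n, -Q^f, -Q^b, -Q)$, $\Theta_{12} = \mathrm{Diag}(-P, 0_{3N})$, $\Theta_{22} = \mathrm{Diag}(0_n, Q^f, Q^b, Q)$. Then $\begin{pmatrix} I \\ \nabla \end{pmatrix}^* \Theta \begin{pmatrix}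 I \\ \nabla \end{pmatrix}$ is negative semidefinite. -/
open Matrix ComplexOrder

/-- Index type for the delay-independent uncertainty: integrator block of size `N+1`
followed by the three delay blocks of size `N`. -/
abbrev IodIdx (N : ℕ) : Type := Fin (N + 1) ⊕ (Fin N ⊕ Fin N ⊕ Fin N)

/-!
With `J = [I; ∇]` the form `Jᴴ Θ J` expands to `Θ₁₁ + Θ₁₂ ∇ + ∇ᴴ Θ₁₂ᴴ + ∇ᴴ Θ₂₂ ∇`, and since
`Θ₁₁ = -Θ₂₂` its negative splits into two positive semidefinite parts. The delay part
`Θ₂₂ - ∇ᴴ Θ₂₂ ∇` is diagonal with entries `(1 - |e^{-τ s}|²) q ≥ 0`, because delays are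
contractive on the closed right half-plane. The integrator part is `2 Re(s⁻¹) P` in the top-left
block, which is positive semidefinite because `Re s⁻¹ = Re s / |s|² ≥ 0`.
-/

namespace Matrix

variable {k m n R : Type*}

theorem conjTranspose_fromRows_mul_fromBlocks_mul_fromRows [Fintype m] [Fintype n] [Semiring R]
    [StarRing R] (A : Matrix m k R) (D : Matrix n k R) (Θ₁₁ : Matrix m m R) (Θ₁₂ : Matrix m n R)
    (Θ₂₁ : Matrix n m R) (Θ₂₂ : Matrix n n R) :
    (fromRows A D)ᴴ * fromBlocks Θ₁₁ Θ₁₂ Θ₂₁ Θ₂₂ * fromRows A D =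
      Aᴴ * Θ₁₁ * A + Aᴴ * Θ₁₂ * D + Dᴴ * Θ₂₁ * A + Dᴴ * Θ₂₂ * D := by
  rw [conjTranspose_fromRows_eq_fromCols_conjTranspose, fromCols_mul_fromBlocks,
    fromCols_mul_fromRows]
  simp only [Matrix.add_mul, Matrix.mul_assoc]
  abel

theorem PosSemidef.fromBlocks_zero_zero_zero [Fintype m] [Fintype n] [DecidableEq m] [CommRing R]
    [PartialOrder R] [StarRing R] {A : Matrix m m R} (hA : A.PosSemidef) :
    (fromBlocks A 0 0 (0 : Matrix n n R)).PosSemidef := by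
  have h := hA.conjTranspose_mul_mul_same (fromCols (1 : Matrix m m R) (0 : Matrix m n R))
  rwa [conjTranspose_fromCols_eq_fromRows_conjTranspose, conjTranspose_one, conjTranspose_zero,
    fromRows_mul, fromRows_mul_fromCols, Matrix.one_mul, Matrix.zero_mul, Matrix.mul_one,
    Matrix.mul_zero, Matrix.zero_mul, Matrix.zero_mul] at h

theorem posSemidef_diagonal_sub_conjTranspose_mul_mul [Fintype n] [DecidableEq n] [CommRing R]
    [PartialOrder R] [StarRing R] [StarOrderedRing R] {c d : n → R}
    (h : ∀ i, star (d i) * c i * d i ≤ c i) :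
    (diagonal c - (diagonal d)ᴴ * diagonal c * diagonal d).PosSemidef := by
  rw [diagonal_conjTranspose, diagonal_mul_diagonal, diagonal_mul_diagonal, diagonal_sub]
  exact PosSemidef.diagonal fun i => sub_nonneg.2 (h i)

theorem PosSemidef.smul_add_conjTranspose_smul [Fintype n] {P : Matrix n n ℂ}
    (hP : P.PosSemidef) {z : ℂ} (hz : 0 ≤ z.re) : (z • P + (z • P)ᴴ).PosSemidef := by
  rw [conjTranspose_smul, hP.isHermitian.eq, ← add_smul, Complex.star_def, Complex.add_conj]
  exact hP.smul (by exact_mod_cast mul_nonneg zero_le_two hz)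

theorem posSemidef_neg_fromBlocks_mul_diagonal_add_conjTranspose [Fintype m] [Fintype n]
    [DecidableEq m] [DecidableEq n] {P : Matrix m m ℂ} (hP : P.PosSemidef) {z : ℂ} (hz : 0 ≤ z.re)
    (d : n → ℂ) :
    (-(fromBlocks (-P) 0 0 (0 : Matrix n n ℂ) * diagonal (Sum.elim (fun _ => z) d) +
      (diagonal (Sum.elim (fun _ => z) d))ᴴ * (fromBlocks (-P) 0 0 0)ᴴ)).PosSemidef := by
  have hprod : fromBlocks (-P) 0 0 (0 : Matrix n n ℂ) * diagonal (Sum.elim (fun _ => z) d) =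
      fromBlocks (-(z • P)) 0 0 0 := by
    rw [← fromBlocks_diagonal, fromBlocks_multiply, ← smul_one_eq_diagonal]
    simp only [Matrix.mul_zero, Matrix.zero_mul, add_zero, Matrix.mul_smul, Matrix.mul_one,
      smul_neg, smul_zero]
  rw [← conjTranspose_mul, hprod, fromBlocks_conjTranspose, fromBlocks_add, fromBlocks_neg]
  simp only [conjTranspose_neg, conjTranspose_zero, add_zero, neg_zero, ← neg_add, neg_neg]
  exact (hP.smul_add_conjTranspose_smul hz).fromBlocks_zero_zero_zero

end Matrix

namespace Complex

theorem re_inv_nonneg {z : ℂ} (hz : 0 ≤ z.re) : 0 ≤ z⁻¹.re := by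
  rw [inv_re]
  exact div_nonneg hz (normSq_nonneg z)

theorem norm_exp_neg_mul_le_one {τ : ℝ} (hτ : 0 ≤ τ) {s : ℂ} (hs : 0 ≤ s.re) :
    ‖exp (-(τ : ℂ) * s)‖ ≤ 1 := by
  rw [norm_exp, Real.exp_le_one_iff, neg_mul, neg_re, re_ofReal_mul, neg_nonpos]
  exact mul_nonneg hτ hs

theorem star_mul_mul_le_of_norm_le_one {z c : ℂ} (hc : 0 ≤ c) (hz : ‖z‖ ≤ 1) :
    star z * c * z ≤ c := by
  rw [mul_right_comm, star_def, conj_mul']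
  refine mul_le_of_le_one_left hc ?_
  exact_mod_cast pow_le_one₀ (norm_nonneg z) hz

end Complex

theorem iod_separator_negativity_general (N : ℕ)
    (s : ℂ) (hre : 0 ≤ s.re)
    (τf τb τ : Fin N → ℝ) (hτf : ∀ i, 0 ≤ τf i) (hτb : ∀ i, 0 ≤ τb i) (hτ : ∀ i, 0 ≤ τ i)
    (P : Matrix (Fin (N + 1)) (Fin (N + 1)) ℂ) (hP : P.PosSemidef)
    (qf qb q : Fin N → ℝ) (hqf : ∀ i, 0 ≤ qf i) (hqb : ∀ i, 0 ≤ qb i) (hq : ∀ i, 0 ≤ q i)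
    (nab : Matrix (IodIdx N) (IodIdx N) ℂ)
    (hnab : nab = Matrix.diagonal (Sum.elim (fun _ => s⁻¹)
      (Sum.elim (fun i => Complex.exp (-(τf i : ℂ) * s))
        (Sum.elim (fun i => Complex.exp (-(τb i : ℂ) * s))
          (fun i => Complex.exp (-(τ i : ℂ) * s))))))
    (Θ11 Θ12 Θ22 : Matrix (IodIdx N) (IodIdx N) ℂ)
    (hΘ11 : Θ11 = Matrix.diagonal (Sum.elim (fun _ => (0 : ℂ))
      (Sum.elim (fun i => -(qf i : ℂ))
        (Sum.elim (fun i => -(qb i : ℂ)) (fun i => -(q i : ℂ))))))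
    (hΘ12 : Θ12 = Matrix.fromBlocks (-P) 0 0 0)
    (hΘ22 : Θ22 = Matrix.diagonal (Sum.elim (fun _ => (0 : ℂ))
      (Sum.elim (fun i => (qf i : ℂ))
        (Sum.elim (fun i => (qb i : ℂ)) (fun i => (q i : ℂ))))))
    (Θ : Matrix (IodIdx N ⊕ IodIdx N) (IodIdx N ⊕ IodIdx N) ℂ)
    (hΘ : Θ = Matrix.fromBlocks Θ11 Θ12 Θ12ᴴ Θ22)
    (J : Matrix (IodIdx N ⊕ IodIdx N) (IodIdx N) ℂ)
    (hJ : J = Matrix.of fun k j =>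
      Sum.elim (fun i => if i = j then (1 : ℂ) else 0) (fun i => nab i j) k) :
    (-(Jᴴ * Θ * J)).PosSemidef := by
  have hJ_fromRows : J = fromRows 1 nab := by
    rw [hJ]
    ext (k | k) j <;> simp [one_apply]
  have hΘ11_neg : Θ11 = -Θ22 := by
    rw [hΘ11, hΘ22, diagonal_neg]
    congr 1
    funext k
    rcases k with _ | _ | _ | _ <;> simp
  rw [hJ_fromRows, hΘ, conjTranspose_fromRows_mul_fromBlocks_mul_fromRows, hΘ11_neg]
  simp only [conjTranspose_one, Matrix.one_mul, Matrix.mul_one]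
  rw [show -(-Θ22 + Θ12 * nab + nabᴴ * Θ12ᴴ + nabᴴ * Θ22 * nab) =
      (Θ22 - nabᴴ * Θ22 * nab) + -(Θ12 * nab + nabᴴ * Θ12ᴴ) by abel]
  refine PosSemidef.add ?delays ?integrator
  case delays =>
    rw [hΘ22, hnab]
    refine posSemidef_diagonal_sub_conjTranspose_mul_mul ?_
    rintro (i | i | i | i)
    · simp
    · exact Complex.star_mul_mul_le_of_norm_le_one (Complex.zero_le_real.2 (hqf i))
        (Complex.norm_exp_neg_mul_le_one (hτf i) hre)
    · exact Complex.star_mul_mul_le_of_norm_le_one (Complex.zero_le_real.2 (hqb i))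
        (Complex.norm_exp_neg_mul_le_one (hτb i) hre)
    · exact Complex.star_mul_mul_le_of_norm_le_one (Complex.zero_le_real.2 (hq i))
        (Complex.norm_exp_neg_mul_le_one (hτ i) hre)
  case integrator =>
    rw [hΘ12, hnab]
    exact posSemidef_neg_fromBlocks_mul_diagonal_add_conjTranspose hP (Complex.re_inv_nonneg hre) _

/-- The delay-independent quadratic separator `Θ` of the TCP/AQM model satisfies the
uncertainty-side inequality: `[I; ∇]ᴴ Θ [I; ∇]` is negative semidefinite for the
uncertainty `∇ = Diag(s⁻¹ I, 𝒟_{τᶠ}, 𝒟_{τᵇ}, 𝒟_τ)` at any nonzero point `s` of the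
closed right half-plane. -/
theorem iod_separator_negativity (N : ℕ) (hN : 1 ≤ N)
    (s : ℂ) (hs : s ≠ 0) (hre : 0 ≤ s.re)
    (τf τb τ : Fin N → ℝ) (hτf : ∀ i, 0 ≤ τf i) (hτb : ∀ i, 0 ≤ τb i) (hτ : ∀ i, 0 ≤ τ i)
    (P : Matrix (Fin (N + 1)) (Fin (N + 1)) ℂ) (hP : P.PosSemidef)
    (qf qb q : Fin N → ℝ) (hqf : ∀ i, 0 ≤ qf i) (hqb : ∀ i, 0 ≤ qb i) (hq : ∀ i, 0 ≤ q i)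
    (nab : Matrix (IodIdx N) (IodIdx N) ℂ)
    (hnab : nab = Matrix.diagonal (Sum.elim (fun _ => s⁻¹)
      (Sum.elim (fun i => Complex.exp (-(τf i : ℂ) * s))
        (Sum.elim (fun i => Complex.exp (-(τb i : ℂ) * s))
          (fun i => Complex.exp (-(τ i : ℂ) * s))))))
    (Θ11 Θ12 Θ22 : Matrix (IodIdx N) (IodIdx N) ℂ)
    (hΘ11 : Θ11 = Matrix.diagonal (Sum.elim (fun _ => (0 : ℂ))
      (Sum.elim (fun i => -(qf i : ℂ))
        (Sum.elim (fun i => -(qb i : ℂ)) (fun i => -(q i : ℂ))))))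
    (hΘ12 : Θ12 = Matrix.fromBlocks (-P) 0 0 0)
    (hΘ22 : Θ22 = Matrix.diagonal (Sum.elim (fun _ => (0 : ℂ))
      (Sum.elim (fun i => (qf i : ℂ))
        (Sum.elim (fun i => (qb i : ℂ)) (fun i => (q i : ℂ))))))
    (Θ : Matrix (IodIdx N ⊕ IodIdx N) (IodIdx N ⊕ IodIdx N) ℂ)
    (hΘ : Θ = Matrix.fromBlocks Θ11 Θ12 Θ12ᴴ Θ22)
    (J : Matrix (IodIdx N ⊕ IodIdx N) (IodIdx N) ℂ)
    (hJ : J = Matrix.of fun k j =>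
      Sum.elim (fun i => if i = j then (1 : ℂ) else 0) (fun i => nab i j) k) :
    (-(Jᴴ * Θ * J)).PosSemidef :=
  iod_separator_negativity_general N s hre τf τb τ hτf hτb hτ P hP qf qb q hqf hqb hq nab hnab Θ11
    Θ12 Θ22 hΘ11 hΘ12 hΘ22 Θ hΘ J hJ
end

section
/- With the notation of the linearization setup, the partial derivative of $F$ with respect to its fourth argument $\beta$ (the queue length), evaluated at the equilibrium point $(x_0, x_0, \xi_0, b_0, p_0)$, equals $h_i = -\frac{2(1-p_0)}{C \tau_0^3}$, provided $\sum_{j=1}^N \eta_j x_{j0} = C$. -/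
open scoped BigOperators

/-! At the equilibrium the window-growth term `x₀/σ(β)` and the congestion term
`x₀ (∑ ηⱼ xⱼ₀)/(σ(β) C)` cancel identically in `β` because `∑ ηⱼ xⱼ₀ = C`, so only the
loss-free increase `(1 - p₀)/σ(β)²` depends on the queue length, and its derivative
is `-2(1 - p₀) σ(b₀)⁻³ σ'(b₀)` with `σ' = 1/C`. -/

theorem hasDerivAt_const_div_affine_sq (a C T b : ℝ) (hσ : b / C + T ≠ 0) :
    HasDerivAt (fun β => a / (β / C + T) ^ 2) (-(2 * a / (C * (b / C + T) ^ 3))) b := by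
  have hσ' : HasDerivAt (fun β : ℝ => β / C + T) C⁻¹ b := by
    simpa [div_eq_mul_inv] using ((hasDerivAt_id b).div_const C).add_const T
  refine ((hasDerivAt_const b a).div (hσ'.pow 2) (pow_ne_zero 2 hσ)).congr_deriv ?_
  simp only [Pi.pow_apply]
  field_simp
  ring

theorem tcp_linearization_10_general (N : ℕ)
    (C : ℝ) (hC : 0 < C)
    (η : Fin N → ℝ)
    (Tp : ℝ)
    (b₀ : ℝ)
    (τ₀ : ℝ) (hτ₀def : τ₀ = b₀ / C + Tp) (hτ₀ : 0 < τ₀)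
    (x₀ : ℝ) (hx₀ : 0 < x₀)
    (ξ₀ : Fin N → ℝ)
    (p₀ : ℝ)
    (F : ℝ → ℝ → (Fin N → ℝ) → ℝ → ℝ → ℝ)
    (hF : ∀ x y ξ β ρ, F x y ξ β ρ =
      y * (1 - ρ) / (x * (β / C + Tp) ^ 2) - y * x / 2 * ρ +
        x / (β / C + Tp) - x / ((β / C + Tp) * C) * ∑ j, η j * ξ j)
    (hsum : ∑ j, η j * ξ₀ j = C) :
    deriv (fun β => F x₀ x₀ ξ₀ β p₀) b₀ = -(2 * (1 - p₀) / (C * τ₀ ^ 3)) := by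
  have hsection : (fun β => F x₀ x₀ ξ₀ β p₀) =
      fun β => (1 - p₀) / (β / C + Tp) ^ 2 - x₀ * x₀ / 2 * p₀ := by
    funext β
    rw [hF, hsum, mul_div_mul_left _ _ hx₀.ne', div_mul_eq_div_div, div_mul_cancel₀ _ hC.ne']
    ring
  rw [hsection, hτ₀def]
  exact ((hasDerivAt_const_div_affine_sq _ _ _ _ (hτ₀def ▸ hτ₀.ne')).sub_const _).deriv

/-- The partial derivative of `F` with respect to its fourth argument (the queue length) at the equilibrium equals `hᵢ = -2(1-p₀)/(Cτ₀³)`. -/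
theorem tcp_linearization_10 (N : ℕ) (hN : 1 ≤ N)
    (C : ℝ) (hC : 0 < C)
    (η : Fin N → ℝ) (hη : ∀ j, 0 < η j)
    (Tp : ℝ) (hTp : 0 < Tp)
    (b₀ : ℝ) (hb₀ : 0 ≤ b₀)
    (τ₀ : ℝ) (hτ₀def : τ₀ = b₀ / C + Tp) (hτ₀ : 0 < τ₀)
    (x₀ : ℝ) (hx₀ : 0 < x₀)
    (ξ₀ : Fin N → ℝ) (hξ₀ : ∀ j, 0 < ξ₀ j)
    (p₀ : ℝ)
    (F : ℝ → ℝ → (Fin N → ℝ) → ℝ → ℝ → ℝ)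
    (hF : ∀ x y ξ β ρ, F x y ξ β ρ =
      y * (1 - ρ) / (x * (β / C + Tp) ^ 2) - y * x / 2 * ρ +
        x / (β / C + Tp) - x / ((β / C + Tp) * C) * ∑ j, η j * ξ j)
    (hsum : ∑ j, η j * ξ₀ j = C) :
    deriv (fun β => F x₀ x₀ ξ₀ β p₀) b₀ = -(2 * (1 - p₀) / (C * τ₀ ^ 3)) :=
  tcp_linearization_10_general N C hC η Tp b₀ τ₀ hτ₀def hτ₀ x₀ hx₀ ξ₀ p₀ F hF hsum
end

section
/- With the notation of the linearization setup, if moreover the equilibrium drop probability satisfies $p_0 = \frac{2}{2 + (x_0 \tau_0)^2}$, then the partial derivative of $F$ with respect to its second argument $y$ (the rate delayed by the full round trip time $\tau_i$), evaluated at the equilibrium point $(x_0, x_0, \xi_0, b_0, p_0)$, equals $0$. Consequently, the open-loop linearized dynamics contain no term in the $\tau_i$-delayed rate $\delta x_i(t - \tau_i)$. -/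
open scoped BigOperators

/-- The coefficient of the `τ`-delayed rate `y` in `F x y ξ β ρ`, where `τ = σ β`. -/
noncomputable def delayedRateGain (x τ ρ : ℝ) : ℝ := (1 - ρ) / (x * τ ^ 2) - x / 2 * ρ

/-- At `p₀ = 2 / (2 + (x τ)²)` one has `1 - p₀ = x τ² · (x p₀ / 2)`, so the two terms cancel. -/
theorem delayedRateGain_eq_zero (x : ℝ) {τ : ℝ} (hτ : τ ≠ 0) :
    delayedRateGain x τ (2 / (2 + (x * τ) ^ 2)) = 0 := by
  have hdrop : 1 - 2 / (2 + (x * τ) ^ 2) = x * τ ^ 2 * (x / (2 + (x * τ) ^ 2)) := by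
    have hD : 2 + (x * τ) ^ 2 ≠ 0 := by positivity
    field_simp
    ring
  rcases eq_or_ne x 0 with rfl | hx
  · simp [delayedRateGain]
  · rw [delayedRateGain, hdrop, mul_div_cancel_left₀ _ (by positivity)]
    ring

theorem tcp_linearization_13_general (N : ℕ)
    (C : ℝ)
    (η : Fin N → ℝ)
    (Tp : ℝ)
    (b₀ : ℝ)
    (τ₀ : ℝ) (hτ₀def : τ₀ = b₀ / C + Tp) (hτ₀ : 0 < τ₀)
    (x₀ : ℝ)
    (ξ₀ : Fin N → ℝ)
    (p₀ : ℝ)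
    (F : ℝ → ℝ → (Fin N → ℝ) → ℝ → ℝ → ℝ)
    (hF : ∀ x y ξ β ρ, F x y ξ β ρ =
      y * (1 - ρ) / (x * (β / C + Tp) ^ 2) - y * x / 2 * ρ +
        x / (β / C + Tp) - x / ((β / C + Tp) * C) * ∑ j, η j * ξ j)
    (hp₀ : p₀ = 2 / (2 + (x₀ * τ₀) ^ 2)) :
    deriv (fun y => F x₀ y ξ₀ b₀ p₀) x₀ = 0 := by
  have haffine : (fun y => F x₀ y ξ₀ b₀ p₀)
      = fun y => y * delayedRateGain x₀ τ₀ p₀ + F x₀ 0 ξ₀ b₀ p₀ := by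
    funext y
    simp only [hF, ← hτ₀def, delayedRateGain]
    ring
  rw [haffine, ((hasDerivAt_mul_const _).add_const _).deriv, hp₀]
  exact delayedRateGain_eq_zero x₀ hτ₀.ne'

/-- If the equilibrium drop probability satisfies `p₀ = 2/(2+(x₀τ₀)²)`, the partial derivative of `F` with respect to its second argument (the rate delayed by the round trip time) vanishes at the equilibrium. -/
theorem tcp_linearization_13 (N : ℕ) (hN : 1 ≤ N)
    (C : ℝ) (hC : 0 < C)
    (η : Fin N → ℝ) (hη : ∀ j, 0 < η j)
    (Tp : ℝ) (hTp : 0 < Tp)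
    (b₀ : ℝ) (hb₀ : 0 ≤ b₀)
    (τ₀ : ℝ) (hτ₀def : τ₀ = b₀ / C + Tp) (hτ₀ : 0 < τ₀)
    (x₀ : ℝ) (hx₀ : 0 < x₀)
    (ξ₀ : Fin N → ℝ) (hξ₀ : ∀ j, 0 < ξ₀ j)
    (p₀ : ℝ)
    (F : ℝ → ℝ → (Fin N → ℝ) → ℝ → ℝ → ℝ)
    (hF : ∀ x y ξ β ρ, F x y ξ β ρ =
      y * (1 - ρ) / (x * (β / C + Tp) ^ 2) - y * x / 2 * ρ +
        x / (β / C + Tp) - x / ((β / C + Tp) * C) * ∑ j, η j * ξ j)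
    (hp₀ : p₀ = 2 / (2 + (x₀ * τ₀) ^ 2)) :
    deriv (fun y => F x₀ y ξ₀ b₀ p₀) x₀ = 0 :=
  tcp_linearization_13_general N C η Tp b₀ τ₀ hτ₀def hτ₀ x₀ ξ₀ p₀ F hF hp₀
end
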